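/- Let H be the bipartite graph with parts B = {u'_0,…,u'_{m-1}, v'_0,…,v'_{n-1}} and C = {c_1,…,c_{m+n}}, with edges u'_i c_i for 1 ≤ i ≤ m-1, u'_i c_{i+n+1} for 0 ≤ i ≤ m-1, v'_j c_j for 1 ≤ j ≤ n-1, and v'_j c_{j+m+1} for 0 ≤ j ≤ n-1. If gcd(m+1, n+1) = 1, then H has a perfect matching. -/

import Mathlib

/-- One direction of the adjacency of the auxiliary graph `H`:
`u'_i` (resp. `v'_j`) is joined to `c_k`, where the vertex `.inr x : Fin (m+n)`
represents the color `x + 1`.  Thus `u'_i — c_i` (for `1 ≤ i`) becomes `k + 1 = i`,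
and `u'_i — c_{i+n+1}` becomes `k = i + n`; similarly for `v'_j`. -/
def HRel (m n : ℕ) : ((Fin m ⊕ Fin n) ⊕ Fin (m + n)) → ((Fin m ⊕ Fin n) ⊕ Fin (m + n)) → Prop
  | .inl (.inl i), .inr k => (k : ℕ) + 1 = i ∨ (k : ℕ) = i + n
  | .inl (.inr j), .inr k => (k : ℕ) + 1 = j ∨ (k : ℕ) = j + m
  | _, _ => False

/-- The auxiliary bipartite graph `H`. -/
def Hgraph (m n : ℕ) : SimpleGraph ((Fin m ⊕ Fin n) ⊕ Fin (m + n)) :=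
  SimpleGraph.fromRel (HRel m n)

/-!
Index the colours by residues modulo `N = m + n + 2`, so that `c_0` and `c_{N-1} = c_{-1}` are
the two missing ones. Then `u'_i` joins `c_i` to `c_{i+n+1}` and `v'_j` joins `c_{j+m+1}` to
`c_{j+m+1+(n+1)} = c_j`: every `b ∈ B` joins a residue `tail b` to `tail b + (n + 1)`, and
`tail` is a bijection from `B` onto the residues other than `m` and `-1`. As `n + 1` is a unit
modulo `N`, the steps `z ↦ z + (n + 1)` form a single `N`-cycle; deleting `-1` leaves a path
through all the other residues whose edges are exactly the elements of `B`. The missing colour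
`0` lies on this path; matching each edge before it to its left endpoint and each edge after it
to its right endpoint is a perfect matching.
-/

theorem ZMod.val_add_one_of_ne_neg_one {N : ℕ} [NeZero N] {y : ZMod N} (hy : y ≠ -1) :
    (y + 1).val = y.val + 1 := by
  obtain ⟨k, rfl⟩ := Nat.exists_eq_succ_of_ne_zero (NeZero.ne N)
  have hlt : y.val < k := lt_of_le_of_ne (Nat.lt_succ_iff.1 y.val_lt)
    fun h => hy (ZMod.val_injective _ (h.trans (ZMod.val_neg_one k).symm))
  rw [ZMod.val_add_of_lt] <;> rw [ZMod.val_one_eq_one_mod, Nat.mod_eq_of_lt (by omega)]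
  omega

theorem ZMod.natCast_inj_of_lt {N a b : ℕ} (ha : a < N) (hb : b < N) :
    (a : ZMod N) = b ↔ a = b := by
  rw [ZMod.natCast_eq_natCast_iff', Nat.mod_eq_of_lt ha, Nat.mod_eq_of_lt hb]

namespace SimpleGraph

theorem exists_isPerfectMatching_of_bijective {α β : Type*} {G : SimpleGraph (α ⊕ β)}
    {f : α → β} (hf : Function.Bijective f) (hadj : ∀ a, G.Adj (.inl a) (.inr (f a))) :
    ∃ M : G.Subgraph, M.IsPerfectMatching := by
  refine ⟨⨆ a, G.subgraphOfAdj (hadj a),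
    Subgraph.IsMatching.iSup (fun a => .subgraphOfAdj _) fun a b hab => ?_, fun v => ?_⟩
  · simp [support_subgraphOfAdj, hab, hf.1.ne hab, Set.disjoint_left]
  · rcases v with a | b
    · simp [Subgraph.verts_iSup]
    · simpa [Subgraph.verts_iSup, eq_comm] using hf.2 b

end SimpleGraph

namespace Hgraph

variable {m n : ℕ}

lemma natCast_succ_mul_inv (hg : Nat.gcd (m + 1) (n + 1) = 1) :
    ((n : ZMod (m + n + 2)) + 1) * ((n : ZMod (m + n + 2)) + 1)⁻¹ = 1 := by
  have hc : Nat.Coprime (n + 1) (m + n + 2) := by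
    rw [show m + n + 2 = (m + 1) + (n + 1) by ring, Nat.coprime_add_self_right]
    exact Nat.Coprime.symm hg
  have hu := (ZMod.isUnit_iff_coprime _ _).2 hc
  push_cast at hu
  exact ZMod.mul_inv_of_unit _ hu

lemma natCast_add_add_two_eq_zero : (m : ZMod (m + n + 2)) + n + 2 = 0 := by
  exact_mod_cast ZMod.natCast_self (m + n + 2)

/-- The position of `z` on the path `-1, n, 2n + 1, …` of steps `n + 1`. -/
def pathPos (m n : ℕ) (z : ZMod (m + n + 2)) : ℕ :=
  ((z + 1) * ((n : ZMod (m + n + 2)) + 1)⁻¹).val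

lemma pathPos_injective (hg : Nat.gcd (m + 1) (n + 1) = 1) : Function.Injective (pathPos m n) := by
  intro z w h
  linear_combination ((n : ZMod (m + n + 2)) + 1) * ZMod.val_injective _ h +
    (w - z) * natCast_succ_mul_inv hg

lemma pathPos_add_succ (hg : Nat.gcd (m + 1) (n + 1) = 1) {z : ZMod (m + n + 2)} (hz : z ≠ m) :
    pathPos m n (z + (n + 1)) = pathPos m n z + 1 := by
  have hs := natCast_succ_mul_inv hg
  rw [pathPos, show (z + (n + 1) + 1) * ((n : ZMod (m + n + 2)) + 1)⁻¹ =
      (z + 1) * ((n : ZMod (m + n + 2)) + 1)⁻¹ + 1 by linear_combination hs]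
  refine ZMod.val_add_one_of_ne_neg_one fun h => hz ?_
  linear_combination (n + 1 : ZMod (m + n + 2)) * h - (z + 1) * hs - natCast_add_add_two_eq_zero

/-- `b` joins the colours `c_{tail b}` and `c_{tail b + n + 1}`, indices modulo `m + n + 2`. -/
def tail : Fin m ⊕ Fin n → ℕ
  | .inl i => i
  | .inr j => j + m + 1

lemma tail_lt (b : Fin m ⊕ Fin n) : tail b < m + n + 2 := by
  rcases b with i | j <;> simp only [tail] <;> omega

lemma tail_ne (b : Fin m ⊕ Fin n) : tail b ≠ m := by
  rcases b with i | j <;> simp only [tail] <;> omega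

lemma tail_injective : Function.Injective (tail : Fin m ⊕ Fin n → ℕ) := by
  rintro (i | j) (i' | j') h <;> simp only [tail] at h <;> simp [Fin.ext_iff] <;> omega

-- `i - 1` and `j - 1` are junk where the colour would be the missing `c_0`.
def tailColor : Fin m ⊕ Fin n → Fin (m + n)
  | .inl i => ⟨i - 1, by omega⟩
  | .inr j => ⟨j + m, by omega⟩

def headColor : Fin m ⊕ Fin n → Fin (m + n)
  | .inl i => ⟨i + n, by omega⟩
  | .inr j => ⟨j - 1, by omega⟩

def colorResidue (k : Fin (m + n)) : ZMod (m + n + 2) := (k : ℕ) + 1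

lemma colorResidue_tailColor {b : Fin m ⊕ Fin n} (hb : tail b ≠ 0) :
    colorResidue (tailColor b) = tail b := by
  rcases b with i | j <;> simp only [tail] at hb
  · simp [colorResidue, tailColor, tail, Nat.cast_sub (Nat.one_le_iff_ne_zero.2 hb)]
  · simp [colorResidue, tailColor, tail]

lemma colorResidue_headColor {b : Fin m ⊕ Fin n} (hb : tail b ≠ m + 1) :
    colorResidue (headColor b) = tail b + (n + 1) := by
  rcases b with i | j <;> simp only [tail] at hb
  · simp only [colorResidue, headColor, tail]
    push_cast
    ring
  · simp only [colorResidue, headColor, tail]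
    rw [Nat.cast_sub (by omega)]
    push_cast
    linear_combination -natCast_add_add_two_eq_zero (m := m) (n := n)

lemma adj_tailColor {b : Fin m ⊕ Fin n} (hb : tail b ≠ 0) :
    (Hgraph m n).Adj (.inl b) (.inr (tailColor b)) := by
  refine SimpleGraph.fromRel_adj _ _ _ |>.2 ⟨by simp, Or.inl ?_⟩
  rcases b with i | j
  · exact Or.inl (Nat.sub_add_cancel (Nat.one_le_iff_ne_zero.2 hb))
  · exact Or.inr rfl

lemma adj_headColor {b : Fin m ⊕ Fin n} (hb : tail b ≠ m + 1) :
    (Hgraph m n).Adj (.inl b) (.inr (headColor b)) := by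
  refine SimpleGraph.fromRel_adj _ _ _ |>.2 ⟨by simp, Or.inl ?_⟩
  rcases b with i | j
  · exact Or.inr rfl
  · exact Or.inl (Nat.sub_add_cancel (Nat.one_le_iff_ne_zero.2 fun h => hb (by simp [tail, h])))

def matchColor (m n : ℕ) (b : Fin m ⊕ Fin n) : Fin (m + n) :=
  if pathPos m n (tail b) < pathPos m n 0 then tailColor b else headColor b

lemma tail_ne_zero_of_lt {b : Fin m ⊕ Fin n} (h : pathPos m n (tail b) < pathPos m n 0) :
    tail b ≠ 0 := by
  rintro h0
  simp [h0] at h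

lemma tail_ne_succ_of_not_lt (hg : Nat.gcd (m + 1) (n + 1) = 1) {b : Fin m ⊕ Fin n}
    (h : ¬ pathPos m n (tail b) < pathPos m n 0) : tail b ≠ m + 1 := by
  rintro h1
  have hstep := pathPos_add_succ hg (z := ((m + 1 : ℕ) : ZMod (m + n + 2)))
    (by rw [Ne, ZMod.natCast_inj_of_lt (by omega) (by omega)]; omega)
  rw [show ((m + 1 : ℕ) : ZMod (m + n + 2)) + (n + 1) = 0 by
    push_cast; linear_combination natCast_add_add_two_eq_zero (m := m) (n := n)] at hstep
  rw [h1] at h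
  omega

lemma adj_matchColor (hg : Nat.gcd (m + 1) (n + 1) = 1) (b : Fin m ⊕ Fin n) :
    (Hgraph m n).Adj (.inl b) (.inr (matchColor m n b)) := by
  unfold matchColor
  split_ifs with h
  · exact adj_tailColor (tail_ne_zero_of_lt h)
  · exact adj_headColor (tail_ne_succ_of_not_lt hg h)

lemma pathPos_colorResidue_matchColor (hg : Nat.gcd (m + 1) (n + 1) = 1) (b : Fin m ⊕ Fin n) :
    pathPos m n (colorResidue (matchColor m n b)) =
      if pathPos m n (tail b) < pathPos m n 0 then pathPos m n (tail b)
      else pathPos m n (tail b) + 1 := by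
  unfold matchColor
  split_ifs with h
  · rw [colorResidue_tailColor (tail_ne_zero_of_lt h)]
  · rw [colorResidue_headColor (tail_ne_succ_of_not_lt hg h), pathPos_add_succ hg]
    rw [Ne, ZMod.natCast_inj_of_lt (tail_lt b) (by omega)]
    exact tail_ne b

lemma matchColor_injective (hg : Nat.gcd (m + 1) (n + 1) = 1) :
    Function.Injective (matchColor m n) := by
  intro b b' h
  have hpos := congrArg (pathPos m n ∘ colorResidue) h
  simp only [Function.comp, pathPos_colorResidue_matchColor hg] at hpos
  have htail : pathPos m n (tail b) = pathPos m n (tail b') := by split_ifs at hpos <;> omega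
  exact tail_injective <| (ZMod.natCast_inj_of_lt (tail_lt b) (tail_lt b')).1 <|
    pathPos_injective hg htail

end Hgraph

theorem stmt_8 (m n : ℕ)
    (hg : Nat.gcd (m + 1) (n + 1) = 1) :
    ∃ M : (Hgraph m n).Subgraph, M.IsPerfectMatching :=
  SimpleGraph.exists_isPerfectMatching_of_bijective
    ((Fintype.bijective_iff_injective_and_card _).2 ⟨Hgraph.matchColor_injective hg, by simp⟩)
    (Hgraph.adj_matchColor hg)
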